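/- arXiv:1206.7077 — 3 statements merged into one kernel-verified Lean document; each statement's English description precedes it below -/
import Mathlib

section
/- Let N₀ = ((B·A₀·P_{(1 3 2)})ᵀ)⁻¹·Bᵀ and N₁ = ((B·A₁·P_{(2 3)})ᵀ)⁻¹·Bᵀ. Then N₀ = ![![0,1,0],![1,0,1],![0,−1,−1]] and N₁ = ![![1,0,0],![0,1,1],![−1,0,−1]], and for every (x,y) ∈ ℝ² with 0 ≤ y ≤ x ≤ 1: if x + y ≥ 1 then π((1,x,y)·N₀) = ((1−y)/x, (x−y)/x), and if x + y ≤ 1 then π((1,x,y)·N₁) = (x/(1−y), (x−y)/(1−y)). Hence the TRIP map T_{(e,(1 3 2),(2 3))} is equal to the Mönkemeyer map, which sends (x,y) to ((1−y)/x, (x−y)/x) when x+y ≥ 1 and to (x/(1−y), (x−y)/(1−y)) when x+y ≤ 1. -/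
open Matrix

noncomputable section

def A0 : Matrix (Fin 3) (Fin 3) ℝ := !![0,0,1; 1,0,0; 0,1,1]
def A1 : Matrix (Fin 3) (Fin 3) ℝ := !![1,0,1; 0,1,0; 0,0,1]
def Bm : Matrix (Fin 3) (Fin 3) ℝ := !![1,1,1; 0,1,1; 0,0,1]
/-- the permutation matrix of (1 3 2) -/
def P132 : Matrix (Fin 3) (Fin 3) ℝ := !![0,0,1; 1,0,0; 0,1,0]
/-- the permutation matrix of (2 3) -/
def P23 : Matrix (Fin 3) (Fin 3) ℝ := !![1,0,0; 0,0,1; 0,1,0]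

/-- the projection `π(x₀,x₁,x₂) = (x₁/x₀, x₂/x₀)` -/
def proj (v : Fin 3 → ℝ) : ℝ × ℝ := (v 1 / v 0, v 2 / v 0)

/- Since `Bᵀ` is invertible, `Nᵢ = (Xᵢᵀ)⁻¹ Bᵀ` is certified by the product `Xᵢᵀ Nᵢ = Bᵀ` alone, with no
inverse computed. Then `(1,x,y)·N₀ = (x, 1-y, x-y)` and `(1,x,y)·N₁ = (1-y, x, x-y)`, and projecting
gives the two branches of the Mönkemeyer map. -/

theorem Matrix.inv_mul_eq_of_mul_eq {n R : Type*} [Fintype n] [DecidableEq n] [CommRing R]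
    {X N C : Matrix n n R} (hC : IsUnit C.det) (h : X * N = C) : X⁻¹ * C = N := by
  have hX : IsUnit X.det := isUnit_of_mul_isUnit_left (by rwa [← det_mul, h])
  rw [← h, ← Matrix.mul_assoc, nonsing_inv_mul _ hX, Matrix.one_mul]

theorem det_Bm : Bm.det = 1 := by
  simp [Bm, det_fin_three]

theorem transpose_Bm_A0_P132_mul : (Bm * A0 * P132)ᵀ * !![0,1,0; 1,0,1; 0,-1,-1] = Bmᵀ := by
  ext i j
  fin_cases i <;> fin_cases j <;> simp [Bm, A0, P132, mul_apply, Fin.sum_univ_three]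

theorem transpose_Bm_A1_P23_mul : (Bm * A1 * P23)ᵀ * !![1,0,0; 0,1,1; -1,0,-1] = Bmᵀ := by
  ext i j
  fin_cases i <;> fin_cases j <;> simp [Bm, A1, P23, mul_apply, Fin.sum_univ_three]

-- With Lean's `a / 0 = 0` these hold for all `x, y`; the triangle conditions only make the
-- first coordinate nonzero, so that `π` is genuinely defined.
theorem proj_vecMul_N0 (x y : ℝ) :
    proj (vecMul ![1, x, y] !![0,1,0; 1,0,1; 0,-1,-1]) = ((1 - y) / x, (x - y) / x) := by
  simp [proj, vecMul, dotProduct, Fin.sum_univ_three, sub_eq_add_neg]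

theorem proj_vecMul_N1 (x y : ℝ) :
    proj (vecMul ![1, x, y] !![1,0,0; 0,1,1; -1,0,-1]) = (x / (1 - y), (x - y) / (1 - y)) := by
  simp [proj, vecMul, dotProduct, Fin.sum_univ_three, sub_eq_add_neg]

/-- The TRIP map `T_{(e,(1 3 2),(2 3))}` equals the Mönkemeyer map:
`N₀ = ((B·A₀·P_{(1 3 2)})ᵀ)⁻¹·Bᵀ` and `N₁ = ((B·A₁·P_{(2 3)})ᵀ)⁻¹·Bᵀ` are the stated
matrices, and on the triangle `{0 ≤ y ≤ x ≤ 1}` they induce the two branches of the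
Mönkemeyer map. -/
theorem trip_eq_monkemeyer :
    ((Bm * A0 * P132)ᵀ)⁻¹ * Bmᵀ = !![0,1,0; 1,0,1; 0,-1,-1] ∧
    ((Bm * A1 * P23)ᵀ)⁻¹ * Bmᵀ = !![1,0,0; 0,1,1; -1,0,-1] ∧
    ∀ x y : ℝ, 0 ≤ y → y ≤ x → x ≤ 1 →
      (1 ≤ x + y →
        proj (Matrix.vecMul ![1, x, y] (((Bm * A0 * P132)ᵀ)⁻¹ * Bmᵀ)) =
          ((1 - y) / x, (x - y) / x)) ∧
      (x + y ≤ 1 →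
        proj (Matrix.vecMul ![1, x, y] (((Bm * A1 * P23)ᵀ)⁻¹ * Bmᵀ)) =
          (x / (1 - y), (x - y) / (1 - y))) := by
  have hC : IsUnit Bmᵀ.det := by simp [det_Bm]
  have hN0 := inv_mul_eq_of_mul_eq hC transpose_Bm_A0_P132_mul
  have hN1 := inv_mul_eq_of_mul_eq hC transpose_Bm_A1_P23_mul
  refine ⟨hN0, hN1, fun x y _ _ _ => ⟨fun _ => ?_, fun _ => ?_⟩⟩
  · rw [hN0, proj_vecMul_N0]
  · rw [hN1, proj_vecMul_N1]
end
end

section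
/- Let N₀ = ((B·A₀)ᵀ)⁻¹·Bᵀ, N₁ = ((B·A₁·P_{(2 3)}·A₀·P_{(1 3 2)})ᵀ)⁻¹·Bᵀ, and N₂ = ((B·A₁·P_{(2 3)}·A₁·P_{(2 3)})ᵀ)⁻¹·Bᵀ. Then N₀ = ![![0,0,1],![1,0,−1],![0,1,0]], N₁ = ![![0,1,0],![1,−1,0],![0,0,1]], N₂ = ![![1,0,0],![−1,1,0],![0,0,1]], and for every (x,y) ∈ ℝ² with 0 ≤ y ≤ x ≤ 1: if x+y ≥ 1 then π((1,x,y)·N₀) = (y/x, (1−x)/x); if x+y ≤ 1 and x ≥ 1/2 then π((1,x,y)·N₁) = ((1−x)/x, y/x); if x+y ≤ 1 and x ≤ 1/2 then π((1,x,y)·N₂) = (x/(1−x), y/(1−x)). Hence the Brun map is the Combo TRIP map that applies T_{(e,e,e)} and then applies T_{((2 3),(1 3 2),(2 3))} when (x,y) is not in the subtriangle Δ₀. -/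
open Matrix

noncomputable section

/-! Since `det B = 1`, the identity `Nᵀ * M = B` already forces `M` to be invertible and
`N = (Mᵀ)⁻¹ * Bᵀ`, so each `Nᵢ` is pinned down by one matrix product. The branches of the Brun
map are then read off from the rows `(1,x,y)·N₀ = (x, y, 1-x)`, `(1,x,y)·N₁ = (x, 1-x, y)` and
`(1,x,y)·N₂ = (1-x, x, y)`. -/

theorem Matrix.inv_transpose_mul_transpose_eq {n R : Type*} [Fintype n] [DecidableEq n]
    [CommRing R] {M B C : Matrix n n R} (hB : IsUnit B.det) (h : Cᵀ * M = B) :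
    (Mᵀ)⁻¹ * Bᵀ = C := by
  have hM : IsUnit Mᵀ.det := by
    rw [← h, det_mul] at hB
    simpa only [det_transpose] using isUnit_of_mul_isUnit_right hB
  rw [← h, transpose_mul, transpose_transpose]
  exact nonsing_inv_mul_cancel_left _ _ hM

def N0 : Matrix (Fin 3) (Fin 3) ℝ := !![0,0,1; 1,0,-1; 0,1,0]
def N1 : Matrix (Fin 3) (Fin 3) ℝ := !![0,1,0; 1,-1,0; 0,0,1]
def N2 : Matrix (Fin 3) (Fin 3) ℝ := !![1,0,0; -1,1,0; 0,0,1]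

lemma isUnit_det_Bm : IsUnit Bm.det := by
  simp [Bm, det_fin_three]

lemma N0_transpose_mul : N0ᵀ * (Bm * A0) = Bm := by
  ext i j
  fin_cases i <;> fin_cases j <;> simp [N0, Bm, A0, mul_apply, Fin.sum_univ_three]

lemma N1_transpose_mul : N1ᵀ * (Bm * A1 * P23 * A0 * P132) = Bm := by
  ext i j
  fin_cases i <;> fin_cases j <;> simp [N1, Bm, A0, A1, P23, P132, mul_apply, Fin.sum_univ_three]

lemma N2_transpose_mul : N2ᵀ * (Bm * A1 * P23 * A1 * P23) = Bm := by
  ext i j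
  fin_cases i <;> fin_cases j <;> simp [N2, Bm, A1, P23, mul_apply, Fin.sum_univ_three]

lemma vecMul_N0 (x y : ℝ) : ![1, x, y] ᵥ* N0 = ![x, y, 1 - x] := by
  simp [N0, sub_eq_add_neg]

lemma vecMul_N1 (x y : ℝ) : ![1, x, y] ᵥ* N1 = ![x, 1 - x, y] := by
  simp [N1, sub_eq_add_neg]

lemma vecMul_N2 (x y : ℝ) : ![1, x, y] ᵥ* N2 = ![1 - x, x, y] := by
  simp [N2, sub_eq_add_neg]

/-- The Brun map is the Combo TRIP map which applies `T_{(e,e,e)}` and then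
`T_{((2 3),(1 3 2),(2 3))}` off `Δ₀`: the matrices `N₀ = ((B·A₀)ᵀ)⁻¹·Bᵀ`,
`N₁ = ((B·A₁·P_{(2 3)}·A₀·P_{(1 3 2)})ᵀ)⁻¹·Bᵀ`, `N₂ = ((B·A₁·P_{(2 3)}·A₁·P_{(2 3)})ᵀ)⁻¹·Bᵀ`
are as stated, and on the corresponding pieces of the triangle `{0 ≤ y ≤ x ≤ 1}` they
induce the three branches of the Brun map. -/
theorem brun_is_combo_trip :
    ((Bm * A0)ᵀ)⁻¹ * Bmᵀ = !![0,0,1; 1,0,-1; 0,1,0] ∧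
    ((Bm * A1 * P23 * A0 * P132)ᵀ)⁻¹ * Bmᵀ = !![0,1,0; 1,-1,0; 0,0,1] ∧
    ((Bm * A1 * P23 * A1 * P23)ᵀ)⁻¹ * Bmᵀ = !![1,0,0; -1,1,0; 0,0,1] ∧
    ∀ x y : ℝ, 0 ≤ y → y ≤ x → x ≤ 1 →
      (1 ≤ x + y →
        proj (Matrix.vecMul ![1, x, y] (((Bm * A0)ᵀ)⁻¹ * Bmᵀ)) =
          (y / x, (1 - x) / x)) ∧
      (x + y ≤ 1 → 1/2 ≤ x →
        proj (Matrix.vecMul ![1, x, y] (((Bm * A1 * P23 * A0 * P132)ᵀ)⁻¹ * Bmᵀ)) =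
          ((1 - x) / x, y / x)) ∧
      (x + y ≤ 1 → x ≤ 1/2 →
        proj (Matrix.vecMul ![1, x, y] (((Bm * A1 * P23 * A1 * P23)ᵀ)⁻¹ * Bmᵀ)) =
          (x / (1 - x), y / (1 - x))) := by
  have h0 := inv_transpose_mul_transpose_eq isUnit_det_Bm N0_transpose_mul
  have h1 := inv_transpose_mul_transpose_eq isUnit_det_Bm N1_transpose_mul
  have h2 := inv_transpose_mul_transpose_eq isUnit_det_Bm N2_transpose_mul
  refine ⟨h0, h1, h2, fun x y _ _ _ => ⟨fun _ => ?_, fun _ _ => ?_, fun _ _ => ?_⟩⟩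
  · rw [h0, vecMul_N0]; rfl
  · rw [h1, vecMul_N1]; rfl
  · rw [h2, vecMul_N2]; rfl
end
end

section
/- Let n ≥ 2 be an integer. Define Φ : (S_{n+1})³ → pairs of (n+1)×(n+1) rational matrices by Φ(σ,τ₀,τ₁) = (P_σ·A₀·P_{τ₀}, P_σ·A₁·P_{τ₁}). Then the number of distinct pairs in the range of Φ is at most ((n+1)!)³ / (n−1)!; equivalently, (cardinality of the range of Φ) · (n−1)! ≤ ((n+1)!)³. -/
/-!
Let `c` be the cyclic shift of `Fin (n + 1)`. Then `A₁` and `A₀ P_c` are both the `0/1` matrix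
of the relation `i = j ∨ (i, j) = (a, b)`, with `(a, b) = (0, n)` resp. `(n, 0)`, so each is
invariant under simultaneous permutation of rows and columns by any `ρ` fixing `0` and `n`.
Hence `(σ, τ₀, τ₁) ↦ (ρσ, τ₀ c⁻¹ρ⁻¹c, τ₁ρ⁻¹)` preserves `Φ`, and the copy of `S_{n-1}` formed
by these `ρ` acts freely on triples, so every fibre of `Φ` has at least `(n - 1)!` elements.
-/

open Matrix

noncomputable section

/-- `(A₁)_{i,j} = 1` iff `i = j` or `(i,j) = (1, n+1)` (here written 0-indexed). -/
def A1n (n : ℕ) : Matrix (Fin (n+1)) (Fin (n+1)) ℚ :=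
  Matrix.of fun i j => if i = j ∨ ((i : ℕ) = 0 ∧ (j : ℕ) = n) then 1 else 0

/-- `(A₀)_{i,j} = 1` iff `i = j+1`, or `(i,j) = (1, n+1)`, or `(i,j) = (n+1, n+1)`
(here written 0-indexed). -/
def A0n (n : ℕ) : Matrix (Fin (n+1)) (Fin (n+1)) ℚ :=
  Matrix.of fun i j =>
    if (i : ℕ) = (j : ℕ) + 1 ∨ ((i : ℕ) = 0 ∧ (j : ℕ) = n) ∨ ((i : ℕ) = n ∧ (j : ℕ) = n)
    then 1 else 0

/-- the permutation matrix of `σ ∈ S_{n+1}` -/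
def Pn (n : ℕ) (σ : Equiv.Perm (Fin (n+1))) : Matrix (Fin (n+1)) (Fin (n+1)) ℚ :=
  σ.permMatrix ℚ

/-- `Φ(σ,τ₀,τ₁) = (P_σ·A₀·P_{τ₀}, P_σ·A₁·P_{τ₁})`. -/
def Phi (n : ℕ) (t : Equiv.Perm (Fin (n+1)) × Equiv.Perm (Fin (n+1)) × Equiv.Perm (Fin (n+1))) :
    Matrix (Fin (n+1)) (Fin (n+1)) ℚ × Matrix (Fin (n+1)) (Fin (n+1)) ℚ :=
  (Pn n t.1 * A0n n * Pn n t.2.1, Pn n t.1 * A1n n * Pn n t.2.2)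

theorem Set.ncard_range_mul_card_le {α β G : Type*} [Fintype α] [Fintype G]
    (f : α → β) (act : G → α → α) (hact : ∀ x, Function.Injective (act · x))
    (hf : ∀ g x, f (act g x) = f x) :
    (Set.range f).ncard * Fintype.card G ≤ Fintype.card α := by
  classical
  rw [← Set.image_univ, ← Finset.coe_univ, ← Finset.coe_image, Set.ncard_coe_finset, mul_comm]
  refine Finset.mul_card_image_le_card _ _ fun b hb => ?_
  obtain ⟨x, -, rfl⟩ := Finset.mem_image.mp hb
  calc Fintype.card G = (Finset.univ.map ⟨(act · x), hact x⟩).card := by simp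
    _ ≤ _ := Finset.card_le_card fun y hy => by
      obtain ⟨g, -, rfl⟩ := Finset.mem_map.mp hy
      simp [hf]

def Matrix.oneWithEntry {ι R : Type*} [DecidableEq ι] [Zero R] [One R] (a b : ι) :
    Matrix ι ι R :=
  Matrix.of fun i j => if i = j ∨ (i = a ∧ j = b) then 1 else 0

theorem Matrix.oneWithEntry_submatrix {ι R : Type*} [DecidableEq ι] [Zero R] [One R]
    {a b : ι} (ρ : Equiv.Perm ι) (ha : ρ a = a) (hb : ρ b = b) :
    (oneWithEntry a b : Matrix ι ι R).submatrix ρ ρ = oneWithEntry a b := by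
  ext i j
  simp only [oneWithEntry, submatrix_apply, of_apply]
  conv_lhs => rw [← ha, ← hb]
  simp only [ρ.injective.eq_iff]

theorem A1n_eq (n : ℕ) : A1n n = oneWithEntry 0 (Fin.last n) := by
  ext i j
  simp only [A1n, oneWithEntry, of_apply, Fin.ext_iff, Fin.val_last, Fin.val_zero]

theorem A0n_eq (n : ℕ) :
    A0n n = (oneWithEntry (Fin.last n) 0).submatrix id (finRotate (n + 1)) := by
  ext i j
  simp only [A0n, oneWithEntry, submatrix_apply, of_apply, id, Fin.ext_iff, coe_finRotate,
    Fin.val_last, Fin.val_zero]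
  have := i.isLt
  have := j.isLt
  split_ifs <;> simp_all

theorem Pn_mul_mul_Pn (n : ℕ) (σ τ : Equiv.Perm (Fin (n + 1)))
    (A : Matrix (Fin (n + 1)) (Fin (n + 1)) ℚ) :
    Pn n σ * A * Pn n τ = A.submatrix σ ⇑τ⁻¹ := by
  rw [Pn, Pn, Equiv.Perm.permMatrix, PEquiv.toMatrix_toPEquiv_mul,
    PEquiv.mul_toMatrix_toPEquiv, submatrix_submatrix]
  rfl

theorem Phi_mul_of_fixed (n : ℕ) {ρ : Equiv.Perm (Fin (n + 1))} (h0 : ρ 0 = 0)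
    (hl : ρ (Fin.last n) = Fin.last n) (σ τ₀ τ₁ : Equiv.Perm (Fin (n + 1))) :
    Phi n (ρ * σ, τ₀ * ((finRotate (n + 1))⁻¹ * ρ⁻¹ * finRotate (n + 1)), τ₁ * ρ⁻¹) =
      Phi n (σ, τ₀, τ₁) := by
  simp only [Phi, Pn_mul_mul_Pn, A0n_eq, A1n_eq, submatrix_submatrix]
  conv_rhs => rw [← oneWithEntry_submatrix ρ hl h0, ← oneWithEntry_submatrix ρ h0 hl]
  simp only [submatrix_submatrix]
  congr 2
  funext x
  simp only [_root_.mul_inv_rev, inv_inv, Equiv.Perm.coe_inv, Equiv.apply_symm_apply,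
    Equiv.Perm.coe_mul, Function.comp_apply]

def innerEmbedding (n : ℕ) : Fin (n - 1) ↪ Fin (n + 1) :=
  ⟨fun k => ⟨k + 1, by omega⟩, fun a b h => Fin.ext (by simpa using congrArg Fin.val h)⟩

theorem zero_notMem_range_innerEmbedding (n : ℕ) : 0 ∉ Set.range (innerEmbedding n) := by
  rintro ⟨k, hk⟩
  have : (k : ℕ) + 1 = 0 := congrArg Fin.val hk
  omega

theorem last_notMem_range_innerEmbedding (n : ℕ) :
    Fin.last n ∉ Set.range (innerEmbedding n) := by
  rintro ⟨k, hk⟩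
  have : (k : ℕ) + 1 = n := congrArg Fin.val hk
  omega

theorem count_distinct_algorithms_general (n : ℕ) :
    (Set.range (Phi n)).ncard * (n - 1).factorial ≤ ((n + 1).factorial) ^ 3 := by
  let ρ := Equiv.Perm.viaEmbeddingHom (innerEmbedding n)
  have h0 (π) : ρ π 0 = 0 :=
    Equiv.Perm.viaEmbedding_apply_of_notMem _ _ _ (zero_notMem_range_innerEmbedding n)
  have hl (π) : ρ π (Fin.last n) = Fin.last n :=
    Equiv.Perm.viaEmbedding_apply_of_notMem _ _ _ (last_notMem_range_innerEmbedding n)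
  have key := Set.ncard_range_mul_card_le (Phi n)
    (fun π t => (ρ π * t.1, t.2.1 * ((finRotate (n + 1))⁻¹ * (ρ π)⁻¹ * finRotate (n + 1)),
      t.2.2 * (ρ π)⁻¹))
    (fun t _ _ h =>
      Equiv.Perm.viaEmbeddingHom_injective _ (mul_right_cancel (congrArg Prod.fst h)))
    (fun π t => Phi_mul_of_fixed n (h0 π) (hl π) t.1 t.2.1 t.2.2)
  rwa [Fintype.card_perm, Fintype.card_fin, Fintype.card_prod, Fintype.card_prod,
    Fintype.card_perm, Fintype.card_fin, ← pow_three] at key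

/-- The number of distinct pairs of matrices arising from triples of permutations, i.e.
the number of distinct algorithms on the `n`-dimensional simplex, is at most
`((n+1)!)³ / (n−1)!`. -/
theorem count_distinct_algorithms (n : ℕ) (hn : 2 ≤ n) :
    (Set.range (Phi n)).ncard * (n - 1).factorial ≤ ((n + 1).factorial) ^ 3 :=
  count_distinct_algorithms_general n
end
end
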